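/- Under the assumptions that p_1,…,p_m are independent p-values with P(p_j ≤ t) ≤ t for all j ∈ H_0 and t ∈ [0,1], that the filter F is monotonic, and that the weight functions satisfy Condition 1 (coordinate-wise nondecreasing with Σ_{i∈H_0} E[1/ŵ_i(p_{0,i})] ≤ m), the Weighted Focused BH procedure controls the FDR at level q: E[|U* ∩ H_0| / max(|U*|, 1)] ≤ q. -/

import Mathlib

/-!
Fix a null `j` and let the other p-values `y = p_{-j}` be given. Write `w_j(y)` for the weight of
`j` with `p_j` set to `0`, and `s_j(y)` for the largest value of `p_j` at which `j` is still a
candidate. Monotonicity of the weights and of the filter shows that on `{j ∈ U*}` one has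
`p_j ≤ s_j(y)` and `m w_j(y) s_j(y) ≤ q |U*|`, so that
`FDP ≤ (q / m) ∑_{j ∈ H₀} 1{0 < p_j ≤ s_j(y)} / (w_j(y) s_j(y))`. Since `p_j` is superuniform and
independent of `y`, integrating out `p_j` first bounds the `j`-th term by `E[1 / w_j]`, and
Condition 1 sums these to at most `m`.

Nothing is assumed measurable about the weights, the filter or `t*`. The functions `w_j` and
`s_j` are monotone, and monotone functions of independent real coordinates are almost everywhere
measurable: lower sets in `ℝⁿ` are null-measurable for every product of σ-finite measures, by
induction on `n`, because the sections of a lower set decrease in the first coordinate and only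
countably many of them can jump by positive measure.
-/

open MeasureTheory ProbabilityTheory Finset
open scoped Classical ENNReal

section LowerSet

theorem ae_measure_eq_zero_of_pairwise_aedisjoint {α β : Type*} [MeasurableSpace α]
    [MeasurableSpace β] (ρ : Measure α) {κ : Measure β} [SFinite κ] {K : α → Set β}
    (hK : ∀ x, NullMeasurableSet (K x) κ)
    (hdisj : Pairwise fun x x' => AEDisjoint κ (K x) (K x'))
    (hatom : ∀ x, κ (K x) ≠ 0 → ρ {x} = 0) : ∀ᵐ x ∂ρ, κ (K x) = 0 := by
  have hC : {x | 0 < κ (K x)}.Countable :=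
    Measure.countable_meas_pos_of_disjoint_iUnion₀ hK hdisj
  rw [ae_iff, ← Set.biUnion_of_singleton {x | ¬κ (K x) = 0}]
  simp only [← pos_iff_ne_zero] at hC ⊢
  exact (measure_biUnion_null_iff hC).2 fun x hx => hatom x hx.ne'

theorem MeasureTheory.Measure.countable_setOf_measure_singleton_ne_zero {α : Type*}
    [MeasurableSpace α] [MeasurableSingletonClass α] (ρ : Measure α) [SFinite ρ] :
    {x | ρ {x} ≠ 0}.Countable := by
  simpa only [← pos_iff_ne_zero] using Measure.countable_meas_pos_of_disjoint_iUnion₀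
    (fun _ => (measurableSet_singleton _).nullMeasurableSet)
    fun x y hxy => Disjoint.aedisjoint (Set.disjoint_singleton.2 hxy)

theorem ae_measure_biInter_sdiff_biUnion_eq_zero {β : Type*} [MeasurableSpace β]
    (ρ : Measure ℝ) {κ : Measure β} [SFinite κ] {D : Set ℝ} (hD : D.Countable)
    (hQ : ∀ r : ℚ, (r : ℝ) ∈ D) (hatom : ∀ x, ρ {x} ≠ 0 → x ∈ D) {L U : ℝ → Set β}
    (hLm : ∀ d, MeasurableSet (L d)) (hUm : ∀ d, MeasurableSet (U d))
    (hgap : ∀ d, κ (U d \ L d) = 0) :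
    ∀ᵐ x ∂ρ, κ ((⋂ d ∈ D ∩ Set.Iic x, U d) \ ⋃ d ∈ D ∩ Set.Ici x, L d) = 0 := by
  refine ae_measure_eq_zero_of_pairwise_aedisjoint ρ (fun x => ?_) (fun x x' hne => ?_) ?_
  · exact ((MeasurableSet.biInter (hD.mono Set.inter_subset_left) fun d _ => hUm d).diff
      (MeasurableSet.biUnion (hD.mono Set.inter_subset_left) fun d _ => hLm d)).nullMeasurableSet
  · wlog hlt : x < x' generalizing x x'
    · exact (this x' x hne.symm ((not_lt.1 hlt).lt_of_ne' hne)).symm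
    -- two sections at `x < r < x'` can only meet inside `U r \ L r`
    obtain ⟨r, hxr, hrx'⟩ := exists_rat_btwn hlt
    refine measure_mono_null (fun y hy => Set.mem_sdiff_of_mem ?_ fun hyL => ?_) (hgap r)
    · exact Set.mem_iInter₂.1 hy.2.1 r ⟨hQ r, hrx'.le⟩
    · exact hy.1.2 (Set.mem_biUnion ⟨hQ r, hxr.le⟩ hyL)
  · intro x hx
    by_contra hρx
    refine hx (measure_mono_null (fun y hy => Set.mem_sdiff_of_mem ?_ fun hyL => ?_) (hgap x))
    · exact Set.mem_iInter₂.1 hy.1 x ⟨hatom x hρx, Set.mem_Iic.2 le_rfl⟩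
    · exact hy.2 (Set.mem_biUnion ⟨hatom x hρx, Set.mem_Ici.2 le_rfl⟩ hyL)

theorem nullMeasurableSet_prod_of_antitone_sections {β : Type*} [MeasurableSpace β]
    (ρ : Measure ℝ) [SFinite ρ] (κ : Measure β) [SFinite κ] {t : Set (ℝ × β)}
    (hanti : ∀ ⦃x x'⦄ y, x ≤ x' → (x', y) ∈ t → (x, y) ∈ t)
    (hsec : ∀ x, NullMeasurableSet (Prod.mk x ⁻¹' t) κ) : NullMeasurableSet t (ρ.prod κ) := by
  set D : Set ℝ := Set.range ((↑) : ℚ → ℝ) ∪ {x | ρ {x} ≠ 0}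
  have hD : D.Countable :=
    (Set.countable_range _).union ρ.countable_setOf_measure_singleton_ne_zero
  choose L hLt hLm hLae using fun x => (hsec x).exists_measurable_subset_ae_eq
  choose U hUt hUm hUae using fun x => (hsec x).exists_measurable_superset_ae_eq
  set I := ⋃ d ∈ D, Set.Iic d ×ˢ L d
  set O := ⋂ d ∈ D, Set.Iio d ×ˢ Set.univ ∪ Set.univ ×ˢ U d
  have hI : MeasurableSet I := .biUnion hD fun d _ => measurableSet_Iic.prod (hLm d)
  have hO : MeasurableSet O := .biInter hD fun d _ =>
    (measurableSet_Iio.prod .univ).union (MeasurableSet.univ.prod (hUm d))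
  have hIt : I ⊆ t := by
    simp only [I, Set.iUnion_subset_iff]
    rintro d - ⟨x, y⟩ ⟨hx, hy⟩
    exact hanti y hx (hLt d hy)
  have htO : t ⊆ O := by
    simp only [O, Set.subset_iInter_iff]
    rintro d - ⟨x, y⟩ hxy
    rcases lt_or_ge x d with h | h
    · exact Or.inl ⟨h, trivial⟩
    · exact Or.inr ⟨trivial, hUt d (hanti y h hxy)⟩
  have hsec_gap : ∀ x, Prod.mk x ⁻¹' (O \ I) =
      (⋂ d ∈ D ∩ Set.Iic x, U d) \ ⋃ d ∈ D ∩ Set.Ici x, L d := by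
    intro x
    ext y
    simp only [O, I, Set.mem_preimage, Set.mem_sdiff, Set.mem_iInter₂, Set.mem_iUnion₂,
      Set.mem_union, Set.mem_prod, Set.mem_Iio, Set.mem_Iic, Set.mem_Ici, Set.mem_inter_iff,
      Set.mem_univ, and_true, true_and, not_exists, not_and, or_iff_not_imp_left, not_lt]
    grind
  have hgap : (ρ.prod κ) (O \ I) = 0 := by
    rw [Measure.prod_apply (hO.diff hI),
      lintegral_eq_zero_iff (measurable_measure_prodMk_left (hO.diff hI))]
    simp only [hsec_gap]
    exact ae_measure_biInter_sdiff_biUnion_eq_zero ρ hD (fun r => Or.inl ⟨r, rfl⟩)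
      (fun x hx => Or.inr hx) hLm hUm fun d => (ae_eq_set.1 ((hUae d).trans (hLae d).symm)).1
  have := hI.nullMeasurableSet.union (NullMeasurableSet.of_null (μ := ρ.prod κ)
    (measure_mono_null (Set.sdiff_subset_sdiff_left htO) hgap))
  rwa [Set.union_sdiff_cancel hIt] at this

theorem Fin.insertNth_le_insertNth {n : ℕ} {α : Type*} [Preorder α] (i : Fin (n + 1))
    {x x' : α} {p p' : Fin n → α} (hx : x ≤ x') (hp : p ≤ p') :
    i.insertNth (α := fun _ => α) x p ≤ i.insertNth x' p' :=
  Fin.insertNth_le_iff.2 ⟨by simpa using hx, by simpa using hp⟩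

theorem IsLowerSet.nullMeasurableSet_pi : ∀ {n : ℕ} (ν : Fin n → Measure ℝ)
    [∀ i, SigmaFinite (ν i)] {s : Set (Fin n → ℝ)}, IsLowerSet s →
    NullMeasurableSet s (Measure.pi ν)
  | 0, _, _, _, _ => Subsingleton.measurableSet.nullMeasurableSet
  | n + 1, ν, _, s, hs => by
    have he := measurePreserving_piFinSuccAbove ν 0
    have ht : NullMeasurableSet ((MeasurableEquiv.piFinSuccAbove (fun _ => ℝ) 0).symm ⁻¹' s)
        ((ν 0).prod (Measure.pi fun k => ν (Fin.succAbove 0 k))) := by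
      refine nullMeasurableSet_prod_of_antitone_sections _ _ (fun x x' y hxx' hy => ?_)
        fun x => IsLowerSet.nullMeasurableSet_pi _ fun y y' hyy' hy => ?_
      · exact hs (Fin.insertNth_le_insertNth 0 hxx' le_rfl) hy
      · exact hs (Fin.insertNth_le_insertNth 0 le_rfl hyy') hy
    simpa using ht.preimage he.quasiMeasurePreserving

theorem Monotone.aemeasurable_pi {n : ℕ} {ν : Fin n → Measure ℝ} [∀ i, SigmaFinite (ν i)]
    {f : (Fin n → ℝ) → ℝ} (hf : Monotone f) : AEMeasurable f (Measure.pi ν) :=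
  NullMeasurable.aemeasurable <| measurable_of_Iio (δ := NullMeasurableSpace _ (Measure.pi ν))
    fun _ => IsLowerSet.nullMeasurableSet_pi ν fun _ _ hxy hy => (hf hxy).trans_lt hy

theorem Antitone.aemeasurable_pi {n : ℕ} {ν : Fin n → Measure ℝ} [∀ i, SigmaFinite (ν i)]
    {f : (Fin n → ℝ) → ℝ} (hf : Antitone f) : AEMeasurable f (Measure.pi ν) := by
  simpa [Pi.neg_def] using (hf.neg.aemeasurable_pi (ν := ν)).neg

end LowerSet

section Superuniform

variable {β : Type*} [MeasurableSpace β]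

theorem aemeasurable_prod_ite_div {ρ : Measure ℝ} {κ : Measure β} {S g : β → ℝ}
    (hS : AEMeasurable S κ) (hg : AEMeasurable g κ) :
    AEMeasurable (fun z : ℝ × β =>
      if 0 < z.1 ∧ z.1 ≤ S z.2 then ENNReal.ofReal (g z.2 / S z.2) else 0) (ρ.prod κ) := by
  have hS' := hS.comp_quasiMeasurePreserving (Measure.quasiMeasurePreserving_snd (μ := ρ))
  have hg' := hg.comp_quasiMeasurePreserving (Measure.quasiMeasurePreserving_snd (μ := ρ))
  have hset : NullMeasurableSet {z : ℝ × β | 0 < z.1 ∧ z.1 ≤ S z.2} (ρ.prod κ) :=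
    (measurableSet_lt measurable_const measurable_fst).nullMeasurableSet.inter
      (nullMeasurableSet_le measurable_fst.aemeasurable hS')
  convert (hg'.div hS').ennreal_ofReal.indicator₀ hset using 1
  ext z
  simp [Set.indicator_apply]

theorem lintegral_prod_ite_div_le {ρ : Measure ℝ} [SFinite ρ]
    (hρ : ∀ t, 0 ≤ t → ρ (Set.Iic t) ≤ ENNReal.ofReal t) (κ : Measure β) [SFinite κ]
    (S g : β → ℝ) :
    ∫⁻ z : ℝ × β, (if 0 < z.1 ∧ z.1 ≤ S z.2 then ENNReal.ofReal (g z.2 / S z.2) else 0)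
        ∂(ρ.prod κ) ≤ ∫⁻ y, ENNReal.ofReal (g y) ∂κ := by
  rw [← lintegral_prod_swap]
  refine (lintegral_prod_le _).trans (lintegral_mono fun y => ?_)
  have hsec : (fun x => if 0 < x ∧ x ≤ S y then ENNReal.ofReal (g y / S y) else 0) =
      (Set.Ioc 0 (S y)).indicator fun _ => ENNReal.ofReal (g y / S y) := by
    ext x
    simp [Set.indicator_apply]
  simp only [Prod.swap_prod_mk]
  rw [hsec, lintegral_indicator_const measurableSet_Ioc]
  rcases le_or_gt (S y) 0 with hs | hs
  · simp [Set.Ioc_eq_empty hs.not_gt]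
  calc ENNReal.ofReal (g y / S y) * ρ (Set.Ioc 0 (S y))
      ≤ ENNReal.ofReal (g y / S y) * ENNReal.ofReal (S y) :=
        mul_le_mul_right ((measure_mono Set.Ioc_subset_Iic_self).trans (hρ _ hs.le)) _
    _ = ENNReal.ofReal (g y) := by rw [← ENNReal.ofReal_mul' hs.le, div_mul_cancel₀ _ hs.ne']

variable {Ω : Type*} [MeasurableSpace Ω] {μ : Measure Ω} [IsProbabilityMeasure μ]
  {X : Ω → ℝ} {Y : Ω → β} {S g : β → ℝ}

theorem measure_le_ofReal_of_forall_mem_Icc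
    (hX : ∀ t ∈ Set.Icc (0 : ℝ) 1, μ {ω | X ω ≤ t} ≤ ENNReal.ofReal t) {t : ℝ} (ht : 0 ≤ t) :
    μ {ω | X ω ≤ t} ≤ ENNReal.ofReal t := by
  rcases le_total t 1 with ht1 | ht1
  · exact hX t ⟨ht, ht1⟩
  · exact prob_le_one.trans (ENNReal.one_le_ofReal.2 ht1)

theorem ProbabilityTheory.IndepFun.aemeasurable_ite_div (hXY : IndepFun X Y μ)
    (hX : Measurable X) (hY : Measurable Y) (hS : AEMeasurable S (μ.map Y))
    (hg : AEMeasurable g (μ.map Y)) :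
    AEMeasurable (fun ω =>
      if 0 < X ω ∧ X ω ≤ S (Y ω) then ENNReal.ofReal (g (Y ω) / S (Y ω)) else 0) μ := by
  have hlaw := (indepFun_iff_map_prod_eq_prod_map_map hX.aemeasurable hY.aemeasurable).1 hXY
  exact (hlaw ▸ aemeasurable_prod_ite_div hS hg).comp_aemeasurable (hX.prodMk hY).aemeasurable

theorem ProbabilityTheory.IndepFun.lintegral_ite_div_le (hXY : IndepFun X Y μ)
    (hX : Measurable X) (hY : Measurable Y)
    (hX_le : ∀ t, 0 ≤ t → μ {ω | X ω ≤ t} ≤ ENNReal.ofReal t)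
    (hS : AEMeasurable S (μ.map Y)) (hg : AEMeasurable g (μ.map Y)) :
    ∫⁻ ω, (if 0 < X ω ∧ X ω ≤ S (Y ω) then ENNReal.ofReal (g (Y ω) / S (Y ω)) else 0) ∂μ ≤
      ∫⁻ ω, ENNReal.ofReal (g (Y ω)) ∂μ := by
  have hlaw := (indepFun_iff_map_prod_eq_prod_map_map hX.aemeasurable hY.aemeasurable).1 hXY
  have hρ : ∀ t, 0 ≤ t → μ.map X (Set.Iic t) ≤ ENNReal.ofReal t := fun t ht => by
    rw [Measure.map_apply hX measurableSet_Iic]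
    exact hX_le t ht
  calc ∫⁻ ω, (if 0 < X ω ∧ X ω ≤ S (Y ω) then ENNReal.ofReal (g (Y ω) / S (Y ω)) else 0) ∂μ
      = ∫⁻ z : ℝ × β, (if 0 < z.1 ∧ z.1 ≤ S z.2 then ENNReal.ofReal (g z.2 / S z.2) else 0)
          ∂((μ.map X).prod (μ.map Y)) := by
        rw [← hlaw, lintegral_map' (hlaw ▸ aemeasurable_prod_ite_div hS hg)
          (hX.prodMk hY).aemeasurable]
    _ ≤ ∫⁻ y, ENNReal.ofReal (g y) ∂(μ.map Y) := lintegral_prod_ite_div_le hρ _ S g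
    _ = ∫⁻ ω, ENNReal.ofReal (g (Y ω)) ∂μ := lintegral_map' hg.ennreal_ofReal hY.aemeasurable

end Superuniform

section RemoveNth

variable {Ω β : Type*} [MeasurableSpace Ω] [MeasurableSpace β] {μ : Measure Ω}
  [IsProbabilityMeasure μ] {n : ℕ} {f : Fin (n + 1) → Ω → β}

theorem ProbabilityTheory.iIndepFun.map_apply_removeNth_eq_prod (hf : ∀ i, Measurable (f i))
    (h : iIndepFun f μ) (j : Fin (n + 1)) :
    μ.map (fun ω => (f j ω, j.removeNth fun i => f i ω)) =
      (μ.map (f j)).prod (Measure.pi fun k => μ.map (f (j.succAbove k))) := by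
  rw [← (measurePreserving_piFinSuccAbove (fun i => μ.map (f i)) j).map_eq,
    ← h.map_fun_eq_pi_map fun i => (hf i).aemeasurable,
    Measure.map_map (MeasurableEquiv.measurable _) (measurable_pi_lambda _ hf)]
  rfl

theorem ProbabilityTheory.iIndepFun.map_removeNth_eq_pi (hf : ∀ i, Measurable (f i))
    (h : iIndepFun f μ) (j : Fin (n + 1)) :
    μ.map (fun ω => j.removeNth fun i => f i ω) =
      Measure.pi fun k => μ.map (f (j.succAbove k)) := by
  have hpair : Measurable fun ω => (f j ω, j.removeNth fun i => f i ω) :=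
    (hf j).prodMk (measurable_pi_lambda _ fun k => hf _)
  have := congr_arg (Measure.map Prod.snd) (h.map_apply_removeNth_eq_prod hf j)
  rwa [Measure.map_map measurable_snd hpair, Measure.map_snd_prod,
    Measure.map_apply (hf j) .univ, Set.preimage_univ, measure_univ, one_smul] at this

theorem ProbabilityTheory.iIndepFun.indepFun_removeNth (hf : ∀ i, Measurable (f i))
    (h : iIndepFun f μ) (j : Fin (n + 1)) :
    IndepFun (f j) (fun ω => j.removeNth fun i => f i ω) μ := by
  have hY : Measurable fun ω => j.removeNth fun i => f i ω :=
    measurable_pi_lambda _ fun k => hf _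
  rw [indepFun_iff_map_prod_eq_prod_map_map (hf j).aemeasurable hY.aemeasurable,
    h.map_removeNth_eq_pi hf j]
  exact h.map_apply_removeNth_eq_prod hf j

end RemoveNth

theorem ofReal_integral_le_lintegral_ofReal {α : Type*} [MeasurableSpace α] {μ : Measure α}
    {f : α → ℝ} (hf : ∀ a, 0 ≤ f a) :
    ENNReal.ofReal (∫ a, f a ∂μ) ≤ ∫⁻ a, ENNReal.ofReal (f a) ∂μ := by
  rw [← Real.enorm_of_nonneg (integral_nonneg hf)]
  simpa only [Real.enorm_of_nonneg (hf _)] using enorm_integral_le_lintegral_enorm f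

noncomputable section

namespace WeightedFocusedBH

def candidates {m : ℕ} (what : Fin m → (Fin m → ℝ) → ℝ) (v : Fin m → ℝ) (t : ℝ) :
    Finset (Fin m) :=
  univ.filter fun j => what j v * v j ≤ t

/-- The `t` of the search grid with `FDP̂(t) ≤ q`, the division cleared. -/
def thresholds {m : ℕ} (q : ℝ) (what : Fin m → (Fin m → ℝ) → ℝ)
    (F : Finset (Fin m) → (Fin m → ℝ) → Finset (Fin m)) (v : Fin m → ℝ) : Set ℝ :=
  {t | (t = 0 ∨ ∃ i, t = what i v * v i) ∧
    (m : ℝ) * t ≤ q * ((F (candidates what v t) v).card : ℝ)}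

theorem mem_candidates {m : ℕ} {what : Fin m → (Fin m → ℝ) → ℝ} {v : Fin m → ℝ} {t : ℝ}
    {j : Fin m} : j ∈ candidates what v t ↔ what j v * v j ≤ t := by
  simp [candidates]

structure IsMonotone {m : ℕ} (q : ℝ) (what : Fin m → (Fin m → ℝ) → ℝ)
    (F : Finset (Fin m) → (Fin m → ℝ) → Finset (Fin m)) (tstar : (Fin m → ℝ) → ℝ) : Prop where
  q_nonneg : 0 ≤ q
  weight_pos : ∀ i v, 0 < what i v
  weight_mono : ∀ i, Monotone (what i)
  card_filter_le : ∀ (v₁ v₂ : Fin m → ℝ) (R₁ R₂ : Finset (Fin m)),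
    v₁ ≤ v₂ → R₂ ⊆ R₁ → (F R₂ v₂).card ≤ (F R₁ v₁).card
  isGreatest : ∀ v, IsGreatest (thresholds q what F v) (tstar v)

namespace IsMonotone

variable {m : ℕ} {q : ℝ} {what : Fin m → (Fin m → ℝ) → ℝ}
  {F : Finset (Fin m) → (Fin m → ℝ) → Finset (Fin m)} {tstar : (Fin m → ℝ) → ℝ}
  (h : IsMonotone q what F tstar)
include h

theorem tstar_nonneg (v : Fin m → ℝ) : 0 ≤ tstar v :=
  (h.isGreatest v).2 ⟨Or.inl rfl, by rw [mul_zero]; exact mul_nonneg h.q_nonneg (Nat.cast_nonneg _)⟩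

theorem exists_mem_thresholds_candidates_subset {v v' : Fin m → ℝ} (h0 : 0 ≤ v')
    (hle : v' ≤ v) :
    ∃ t ∈ thresholds q what F v', candidates what v (tstar v) ⊆ candidates what v' t := by
  set R := candidates what v (tstar v)
  set C := insert 0 (R.image fun i => what i v' * v' i)
  set t := C.max' (insert_nonempty _ _)
  have hRt : R ⊆ candidates what v' t := fun i hi => mem_candidates.2
    (le_max' C _ (mem_insert_of_mem (mem_image_of_mem (fun i => what i v' * v' i) hi)))
  have htv : t ≤ tstar v := by
    refine max'_le _ _ _ fun c hc => ?_
    rcases mem_insert.1 hc with rfl | hc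
    · exact h.tstar_nonneg v
    obtain ⟨i, hi, rfl⟩ := mem_image.1 hc
    exact (mul_le_mul (h.weight_mono i hle) (hle i) (h0 i) (h.weight_pos i v).le).trans
      (mem_candidates.1 hi)
  refine ⟨t, ⟨?_, ?_⟩, hRt⟩
  · rcases mem_insert.1 (max'_mem C _) with ht0 | ht
    · exact Or.inl ht0
    · obtain ⟨i, -, hi⟩ := mem_image.1 ht
      exact Or.inr ⟨i, hi.symm⟩
  · calc (m : ℝ) * t ≤ m * tstar v := by gcongr
      _ ≤ q * (F R v).card := (h.isGreatest v).1.2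
      _ ≤ q * (F (candidates what v' t) v').card :=
          mul_le_mul_of_nonneg_left (by exact_mod_cast h.card_filter_le _ _ _ _ hle hRt)
            h.q_nonneg

theorem candidates_subset_of_le {v v' : Fin m → ℝ} (h0 : 0 ≤ v') (hle : v' ≤ v) :
    candidates what v (tstar v) ⊆ candidates what v' (tstar v') := by
  obtain ⟨t, htv', hR⟩ := h.exists_mem_thresholds_candidates_subset h0 hle
  exact fun i hi => mem_candidates.2 ((mem_candidates.1 (hR hi)).trans ((h.isGreatest v').2 htv'))

theorem card_le_of_le {v v' : Fin m → ℝ} (h0 : 0 ≤ v') (hle : v' ≤ v) :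
    (F (candidates what v (tstar v)) v).card ≤ (F (candidates what v' (tstar v')) v').card :=
  h.card_filter_le _ _ _ _ hle (h.candidates_subset_of_le h0 hle)

end IsMonotone

section Coordinate

variable {n : ℕ} {q : ℝ} {what : Fin (n + 1) → (Fin (n + 1) → ℝ) → ℝ}
  {F : Finset (Fin (n + 1)) → (Fin (n + 1) → ℝ) → Finset (Fin (n + 1))}
  {tstar : (Fin (n + 1) → ℝ) → ℝ}

def nullWeight (what : Fin (n + 1) → (Fin (n + 1) → ℝ) → ℝ) (j : Fin (n + 1))
    (y : Fin n → ℝ) : ℝ :=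
  what j (j.insertNth 0 (y ⊔ 0))

/-- The `p_j`-values in `[0, 1]` keeping `j` a candidate given `p_{-j} = y`. Clamping `y` at `0`
makes this set antitone in `y` on all of `ℝⁿ`. -/
def candidateValues (what : Fin (n + 1) → (Fin (n + 1) → ℝ) → ℝ)
    (tstar : (Fin (n + 1) → ℝ) → ℝ) (j : Fin (n + 1)) (y : Fin n → ℝ) : Set ℝ :=
  {x ∈ Set.Icc (0 : ℝ) 1 | what j (j.insertNth x (y ⊔ 0)) * x ≤ tstar (j.insertNth x (y ⊔ 0))}

def candidateLevel (what : Fin (n + 1) → (Fin (n + 1) → ℝ) → ℝ)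
    (tstar : (Fin (n + 1) → ℝ) → ℝ) (j : Fin (n + 1)) (y : Fin n → ℝ) : ℝ :=
  sSup (candidateValues what tstar j y)

def nullTerm (what : Fin (n + 1) → (Fin (n + 1) → ℝ) → ℝ) (tstar : (Fin (n + 1) → ℝ) → ℝ)
    (j : Fin (n + 1)) (v : Fin (n + 1) → ℝ) : ℝ≥0∞ :=
  if 0 < v j ∧ v j ≤ candidateLevel what tstar j (j.removeNth v) then
    ENNReal.ofReal ((nullWeight what j (j.removeNth v))⁻¹ /
      candidateLevel what tstar j (j.removeNth v))
  else 0

theorem insertNth_removeNth_sup_zero {v : Fin (n + 1) → ℝ} (hv : 0 ≤ v) (j : Fin (n + 1))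
    (x : ℝ) : j.insertNth x (j.removeNth v ⊔ 0) = Function.update v j x := by
  rw [sup_eq_left.2 fun k => hv _, Fin.insertNth_removeNth]

theorem nullWeight_monotone (hw_mono : ∀ i, Monotone (what i)) (j : Fin (n + 1)) :
    Monotone (nullWeight what j) := fun _ _ hyy' =>
  hw_mono j (Fin.insertNth_le_insertNth j le_rfl (sup_le_sup_right hyy' 0))

theorem bddAbove_candidateValues (j : Fin (n + 1)) (y : Fin n → ℝ) :
    BddAbove (candidateValues what tstar j y) :=
  ⟨1, fun _ hx => hx.1.2⟩

theorem le_candidateLevel {v : Fin (n + 1) → ℝ} (hv0 : 0 ≤ v) {j : Fin (n + 1)} (hv1 : v j ≤ 1)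
    (hj : j ∈ candidates what v (tstar v)) :
    v j ≤ candidateLevel what tstar j (j.removeNth v) := by
  refine le_csSup (bddAbove_candidateValues j _) ⟨⟨hv0 j, hv1⟩, ?_⟩
  rw [insertNth_removeNth_sup_zero hv0, Function.update_eq_self]
  exact mem_candidates.1 hj

namespace IsMonotone

variable (h : IsMonotone q what F tstar)
include h

theorem zero_mem_candidateValues (j : Fin (n + 1)) (y : Fin n → ℝ) :
    0 ∈ candidateValues what tstar j y :=
  ⟨⟨le_rfl, zero_le_one⟩, by rw [mul_zero]; exact h.tstar_nonneg _⟩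

theorem candidateLevel_antitone (j : Fin (n + 1)) : Antitone (candidateLevel what tstar j) := by
  intro y y' hyy'
  refine csSup_le_csSup (bddAbove_candidateValues j y) ⟨0, h.zero_mem_candidateValues j y'⟩ ?_
  rintro x ⟨hx, hxc⟩
  refine ⟨hx, ?_⟩
  have h0 : 0 ≤ j.insertNth x (y ⊔ 0) :=
    (Fin.le_insertNth_iff (α := fun _ => ℝ)).2 ⟨hx.1, fun k => le_sup_right⟩
  have hle := Fin.insertNth_le_insertNth j (le_refl x) (sup_le_sup_right hyy' 0)
  have hj : j ∈ candidates what (j.insertNth x (y' ⊔ 0)) (tstar (j.insertNth x (y' ⊔ 0))) :=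
    mem_candidates.2 (by simpa using hxc)
  simpa using mem_candidates.1 (h.candidates_subset_of_le h0 hle hj)

theorem mul_nullWeight_mul_le {v : Fin (n + 1) → ℝ} (hv0 : 0 ≤ v) {j : Fin (n + 1)}
    (hj : j ∈ candidates what v (tstar v)) {x : ℝ}
    (hx : x ∈ candidateValues what tstar j (j.removeNth v)) :
    ((n + 1 : ℕ) : ℝ) * nullWeight what j (j.removeNth v) * x ≤
      q * (F (candidates what v (tstar v)) v).card := by
  obtain ⟨⟨hx0, -⟩, hxc⟩ := hx
  rw [insertNth_removeNth_sup_zero hv0] at hxc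
  rw [nullWeight, insertNth_removeNth_sup_zero hv0, mul_assoc]
  -- for `x ≤ v j` the threshold at `v` applies; for `x ≥ v j`, raising `p_j` to `x` cannot
  -- enlarge `U*`
  rcases le_total x (v j) with hxv | hvx
  · calc ((n + 1 : ℕ) : ℝ) * (what j (Function.update v j 0) * x)
        ≤ ((n + 1 : ℕ) : ℝ) * tstar v := by
          gcongr
          refine (mul_le_mul ?_ hxv hx0 (h.weight_pos _ _).le).trans (mem_candidates.1 hj)
          exact h.weight_mono j (by simpa [update_le_self_iff] using hv0 j)
      _ ≤ q * (F (candidates what v (tstar v)) v).card := (h.isGreatest v).1.2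
  · calc ((n + 1 : ℕ) : ℝ) * (what j (Function.update v j 0) * x)
        ≤ ((n + 1 : ℕ) : ℝ) * tstar (Function.update v j x) := by
          gcongr
          exact (mul_le_mul_of_nonneg_right (h.weight_mono j (Function.update_mono hx0))
            hx0).trans hxc
      _ ≤ q * (F (candidates what (Function.update v j x)
            (tstar (Function.update v j x))) (Function.update v j x)).card :=
          (h.isGreatest _).1.2
      _ ≤ q * (F (candidates what v (tstar v)) v).card := mul_le_mul_of_nonneg_left
          (by exact_mod_cast h.card_le_of_le hv0 (le_update_self_iff.2 hvx)) h.q_nonneg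

theorem mul_nullWeight_mul_candidateLevel_le {v : Fin (n + 1) → ℝ} (hv0 : 0 ≤ v)
    {j : Fin (n + 1)} (hj : j ∈ candidates what v (tstar v)) :
    ((n + 1 : ℕ) : ℝ) * nullWeight what j (j.removeNth v) *
        candidateLevel what tstar j (j.removeNth v) ≤
      q * (F (candidates what v (tstar v)) v).card := by
  have hpos : 0 < ((n + 1 : ℕ) : ℝ) * nullWeight what j (j.removeNth v) :=
    mul_pos (by positivity) (h.weight_pos _ _)
  rw [← le_div_iff₀' hpos]
  exact csSup_le ⟨0, h.zero_mem_candidateValues j _⟩ fun x hx =>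
    (le_div_iff₀' hpos).2 (h.mul_nullWeight_mul_le hv0 hj hx)

theorem ofReal_fdp_le (hF_sub : ∀ R v, F R v ⊆ R) (H0 : Finset (Fin (n + 1)))
    {v : Fin (n + 1) → ℝ} (hv0 : 0 ≤ v) (hv1 : v ≤ 1) (hpos : ∀ j ∈ H0, 0 < v j) :
    ENNReal.ofReal (((F (candidates what v (tstar v)) v ∩ H0).card : ℝ) /
        max ((F (candidates what v (tstar v)) v).card : ℝ) 1) ≤
      ENNReal.ofReal (q / (n + 1)) * ∑ j ∈ H0, nullTerm what tstar j v := by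
  set U := F (candidates what v (tstar v)) v
  rw [mul_sum]
  calc ENNReal.ofReal ((U ∩ H0).card / max (U.card : ℝ) 1)
      = ∑ j ∈ U ∩ H0, ENNReal.ofReal (1 / max (U.card : ℝ) 1) := by
        rw [sum_const, nsmul_eq_mul, ← ENNReal.ofReal_natCast,
          ← ENNReal.ofReal_mul (Nat.cast_nonneg _), mul_one_div]
    _ ≤ _ := sum_le_sum fun j hj => ?_
    _ ≤ _ := sum_le_sum_of_subset inter_subset_right
  obtain ⟨hjU, hjH⟩ := mem_inter.1 hj
  have hjc := hF_sub _ _ hjU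
  have hvS := le_candidateLevel hv0 (hv1 j) hjc
  have key := h.mul_nullWeight_mul_candidateLevel_le hv0 hjc
  set S := candidateLevel what tstar j (j.removeNth v)
  set W := nullWeight what j (j.removeNth v)
  have hS : 0 < S := (hpos j hjH).trans_le hvS
  have hW : 0 < W := h.weight_pos _ _
  have hU : (1 : ℝ) ≤ U.card := by exact_mod_cast card_pos.2 ⟨j, hjU⟩
  rw [nullTerm, if_pos ⟨hpos j hjH, hvS⟩, max_eq_left hU,
    ← ENNReal.ofReal_mul (div_nonneg h.q_nonneg (by positivity))]
  refine ENNReal.ofReal_le_ofReal ?_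
  calc 1 / (U.card : ℝ) ≤ q / ((n + 1) * W * S) := by
        rw [div_le_div_iff₀ (by positivity) (by positivity)]
        push_cast at key
        linarith
    _ = q / (n + 1) * (W⁻¹ / S) := by field_simp

end IsMonotone

end Coordinate

section Probability

variable {Ω : Type*} [MeasurableSpace Ω] {μ : Measure Ω} [IsProbabilityMeasure μ] {n : ℕ}
  {q : ℝ} {what : Fin (n + 1) → (Fin (n + 1) → ℝ) → ℝ}
  {F : Finset (Fin (n + 1)) → (Fin (n + 1) → ℝ) → Finset (Fin (n + 1))}
  {tstar : (Fin (n + 1) → ℝ) → ℝ} {p : Fin (n + 1) → Ω → ℝ}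

namespace IsMonotone

variable (h : IsMonotone q what F tstar) (hp : ∀ i, Measurable (p i)) (hindep : iIndepFun p μ)
include h hp hindep

theorem aemeasurable_nullTerm (j : Fin (n + 1)) :
    AEMeasurable (fun ω => nullTerm what tstar j fun i => p i ω) μ := by
  have hlaw := hindep.map_removeNth_eq_pi hp j
  exact (hindep.indepFun_removeNth hp j).aemeasurable_ite_div (hp j)
    (measurable_pi_lambda _ fun k => hp _) (S := candidateLevel what tstar j)
    (g := fun y => (nullWeight what j y)⁻¹)
    (hlaw ▸ (h.candidateLevel_antitone j).aemeasurable_pi)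
    (hlaw ▸ (nullWeight_monotone h.weight_mono j).aemeasurable_pi.inv)

theorem lintegral_nullTerm_le (hp0 : ∀ i ω, 0 ≤ p i ω) (j : Fin (n + 1))
    (hsuper : ∀ t, 0 ≤ t → μ {ω | p j ω ≤ t} ≤ ENNReal.ofReal t) :
    ∫⁻ ω, nullTerm what tstar j (fun i => p i ω) ∂μ ≤
      ENNReal.ofReal (∫ ω, (what j (Function.update (fun i => p i ω) j 0))⁻¹ ∂μ) := by
  have hlaw := hindep.map_removeNth_eq_pi hp j
  have hY : Measurable fun ω => j.removeNth fun i => p i ω :=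
    measurable_pi_lambda _ fun k => hp _
  have hW : ∀ ω, nullWeight what j (j.removeNth fun i => p i ω) =
      what j (Function.update (fun i => p i ω) j 0) := fun ω => by
    rw [nullWeight, insertNth_removeNth_sup_zero fun i => hp0 i ω]
  have hg : AEMeasurable (fun y => (nullWeight what j y)⁻¹)
      (μ.map fun ω => j.removeNth fun i => p i ω) :=
    hlaw ▸ (nullWeight_monotone h.weight_mono j).aemeasurable_pi.inv
  have hint : Integrable (fun ω => (what j (Function.update (fun i => p i ω) j 0))⁻¹) μ := by
    refine Integrable.of_bound (C := (what j 0)⁻¹) ?_ (ae_of_all _ fun ω => ?_)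
    · simp_rw [← hW]
      exact (hg.comp_aemeasurable hY.aemeasurable).aestronglyMeasurable
    · rw [Real.norm_of_nonneg (inv_nonneg.2 (h.weight_pos _ _).le)]
      refine inv_anti₀ (h.weight_pos _ _) (h.weight_mono j fun i => ?_)
      rcases eq_or_ne i j with rfl | hij <;> simp [Function.update_of_ne, *]
  rw [ofReal_integral_eq_lintegral_ofReal hint
    (ae_of_all _ fun ω => inv_nonneg.2 (h.weight_pos _ _).le)]
  simp_rw [← hW]
  exact (hindep.indepFun_removeNth hp j).lintegral_ite_div_le (hp j) hY hsuper
    (hlaw ▸ (h.candidateLevel_antitone j).aemeasurable_pi) hg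

theorem lintegral_sum_nullTerm_le (hp0 : ∀ i ω, 0 ≤ p i ω) {H0 : Finset (Fin (n + 1))}
    (hsuper : ∀ j ∈ H0, ∀ t, 0 ≤ t → μ {ω | p j ω ≤ t} ≤ ENNReal.ofReal t) :
    ∫⁻ ω, ∑ j ∈ H0, nullTerm what tstar j (fun i => p i ω) ∂μ ≤
      ENNReal.ofReal (∑ j ∈ H0, ∫ ω, (what j (Function.update (fun i => p i ω) j 0))⁻¹ ∂μ) := by
  rw [lintegral_finsetSum' _ fun j _ => h.aemeasurable_nullTerm hp hindep j,
    ENNReal.ofReal_sum_of_nonneg fun j _ =>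
      integral_nonneg fun ω => inv_nonneg.2 (h.weight_pos _ _).le]
  exact sum_le_sum fun j hj => h.lintegral_nullTerm_le hp hindep hp0 j (hsuper j hj)

end IsMonotone

end Probability

end WeightedFocusedBH

end

/-- Theorem 1: Weighted Focused BH with independent superuniform null p-values,
a monotonic filter, and weight functions satisfying Condition 1, controls the FDR
at level `q`: `E[|U* ∩ H0| / max(|U*|,1)] ≤ q`, where for each realized p-value
vector `v`, `t*(v)` is the largest `t ∈ {0, ŵ_1v_1, …, ŵ_mv_m}` with
`m·t ≤ q·|F({i : ŵ_i v_i ≤ t}, v)|`, and `U*(v) = F({i : ŵ_i(v)·v_i ≤ t*(v)}, v)`. -/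
theorem wfbh_fdr_control
    {Ω : Type*} [MeasurableSpace Ω] (μ : Measure Ω) [IsProbabilityMeasure μ]
    (m : ℕ) (hm : 0 < m) (q : ℝ) (hq : 0 < q)
    (p : Fin m → Ω → ℝ) (hmeas : ∀ i, Measurable (p i))
    (hrange : ∀ i ω, p i ω ∈ Set.Icc (0:ℝ) 1)
    (hindep : iIndepFun p μ)
    (H0 : Finset (Fin m))
    (hnull : ∀ j ∈ H0, ∀ t ∈ Set.Icc (0:ℝ) 1, μ {ω | p j ω ≤ t} ≤ ENNReal.ofReal t)
    (what : Fin m → (Fin m → ℝ) → ℝ)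
    (hw_pos : ∀ i v, 0 < what i v)
    (hw_mono : ∀ i, Monotone (what i))
    (hw_cond : ∑ i ∈ H0,
        ∫ ω, (what i (Function.update (fun j => p j ω) i 0))⁻¹ ∂μ ≤ (m : ℝ))
    (F : Finset (Fin m) → (Fin m → ℝ) → Finset (Fin m))
    (hF_sub : ∀ R v, F R v ⊆ R)
    (hF_mono : ∀ (v₁ v₂ : Fin m → ℝ) (R₁ R₂ : Finset (Fin m)),
        v₁ ≤ v₂ → R₂ ⊆ R₁ → (F R₂ v₂).card ≤ (F R₁ v₁).card)
    (tstar : (Fin m → ℝ) → ℝ)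
    (ht : ∀ v : Fin m → ℝ, IsGreatest {t : ℝ |
        (t = 0 ∨ ∃ i, t = what i v * v i) ∧
        (m : ℝ) * t ≤ q * ((F (univ.filter fun j => what j v * v j ≤ t) v).card : ℝ)}
        (tstar v))
    (Ustar : (Fin m → ℝ) → Finset (Fin m))
    (hU : ∀ v : Fin m → ℝ,
        Ustar v = F (univ.filter fun j => what j v * v j ≤ tstar v) v) :
    ∫ ω, ((Ustar (fun j => p j ω) ∩ H0).card : ℝ)
        / max ((Ustar (fun j => p j ω)).card : ℝ) 1 ∂μ ≤ q := by
  obtain ⟨n, rfl⟩ : ∃ n, m = n + 1 := ⟨m - 1, by omega⟩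
  have h : WeightedFocusedBH.IsMonotone q what F tstar := ⟨hq.le, hw_pos, hw_mono, hF_mono, ht⟩
  have hp0 : ∀ i ω, 0 ≤ p i ω := fun i ω => (hrange i ω).1
  have hsuper : ∀ j ∈ H0, ∀ t, 0 ≤ t → μ {ω | p j ω ≤ t} ≤ ENNReal.ofReal t :=
    fun j hj _ => measure_le_ofReal_of_forall_mem_Icc (hnull j hj)
  have hpos : ∀ j ∈ H0, ∀ᵐ ω ∂μ, 0 < p j ω := fun j hj => by
    have h0 : μ {ω | p j ω ≤ 0} = 0 := by simpa using hnull j hj 0 ⟨le_rfl, zero_le_one⟩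
    filter_upwards [measure_eq_zero_iff_ae_notMem.1 h0] with ω hω using not_le.1 hω
  have hfdp : ∀ᵐ ω ∂μ, ENNReal.ofReal (((Ustar fun j => p j ω) ∩ H0).card /
      max ((Ustar fun j => p j ω).card : ℝ) 1) ≤
      ENNReal.ofReal (q / (n + 1)) *
        ∑ j ∈ H0, WeightedFocusedBH.nullTerm what tstar j fun i => p i ω := by
    filter_upwards [(Filter.eventually_all_finset H0).2 hpos] with ω hω
    rw [hU]
    exact h.ofReal_fdp_le hF_sub H0 (fun i => hp0 i ω) (fun i => (hrange i ω).2) hω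
  refine (ENNReal.ofReal_le_ofReal_iff hq.le).1 ?_
  calc _ ≤ _ := ofReal_integral_le_lintegral_ofReal fun ω => by positivity
    _ ≤ _ := lintegral_mono_ae hfdp
    _ ≤ ENNReal.ofReal (q / (n + 1)) * ENNReal.ofReal ((n + 1 : ℕ) : ℝ) := by
        rw [lintegral_const_mul' _ _ ENNReal.ofReal_ne_top]
        gcongr
        exact (h.lintegral_sum_nullTerm_le hmeas hindep hp0 hsuper).trans
          (ENNReal.ofReal_le_ofReal hw_cond)
    _ = ENNReal.ofReal q := by
        rw [← ENNReal.ofReal_mul (by positivity)]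
        push_cast
        field_simp
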